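/- arXiv:1903.02028 — 2 statements merged into one kernel-verified Lean document; each statement's English description precedes it below -/
import Mathlib

section
/- A finite partial order P is up-regular if and only if for every nonempty trunk T of P, the set T ∪ L is a trunk of P, where L is the set of all elements of P whose level equals the maximum level attained by an element of T. -/
variable {P : Type*} [PartialOrder P]

/-- Two elements of a partial order are incomparable if neither is `≤` the other. -/
def Incomp (x y : P) : Prop := x ≠ y ∧ ¬x ≤ y ∧ ¬y ≤ x

/-- A subset `T` of a partial order is a trunk if the incomparability relation is
transitive on `T`. -/
def IsTrunkOn (T : Set P) : Prop :=
  ∀ x y z : P, x ∈ T → y ∈ T → z ∈ T → x ≠ z → Incomp x y → Incomp y z → Incomp x z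

/-- The level of an element `x` of a finite partial order: one less than the maximum
cardinality of a chain whose greatest element is `x`. -/
noncomputable def level [Fintype P] (x : P) : ℕ :=
  sSup {n : ℕ | ∃ C : Finset P,
    IsChain (· ≤ ·) (C : Set P) ∧ x ∈ C ∧ (∀ y ∈ C, y ≤ x) ∧ C.card = n} - 1

/-- A finite partial order is up-regular if every element stands in the same order
relation to any two elements of equal level above its own level. -/
def UpRegular (P : Type*) [PartialOrder P] [Fintype P] : Prop :=
  ∀ x y z : P, level x < level y → level y = level z →
    ((x < y ↔ x < z) ∧ (y < x ↔ z < x))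

private def chainSet [Fintype P] (x : P) : Set ℕ :=
  {n : ℕ | ∃ C : Finset P,
    IsChain (· ≤ ·) (C : Set P) ∧ x ∈ C ∧ (∀ y ∈ C, y ≤ x) ∧ C.card = n}

private lemma level_eq' [Fintype P] (x : P) : level x = sSup (chainSet x) - 1 := rfl

private lemma one_mem_chainSet [Fintype P] (x : P) : 1 ∈ chainSet x := by
  refine ⟨{x}, ?_, by simp, by simp, by simp⟩
  simp only [Finset.coe_singleton]
  intro a ha b hb hab
  simp only [Set.mem_singleton_iff] at ha hb
  exact absurd (ha.trans hb.symm) hab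

private lemma bddAbove_chainSet [Fintype P] (x : P) : BddAbove (chainSet x) := by
  refine ⟨Fintype.card P, fun n hn => ?_⟩
  obtain ⟨C, -, -, -, hc⟩ := hn
  exact hc ▸ Finset.card_le_univ C

private lemma level_lt [Fintype P] {x y : P} (h : x < y) : level x < level y := by
  classical
  have hmem := Nat.sSup_mem ⟨1, one_mem_chainSet x⟩ (bddAbove_chainSet x)
  obtain ⟨C, hC, hxC, hCle, hcard⟩ := hmem
  have hyC : y ∉ C := fun hy => absurd (hCle y hy) h.not_ge
  have hmem' : C.card + 1 ∈ chainSet y := by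
    refine ⟨insert y C, ?_, Finset.mem_insert_self y C, ?_, ?_⟩
    · rw [Finset.coe_insert]
      exact hC.insert (fun b hb _ => Or.inr ((hCle b hb).trans h.le))
    · intro w hw
      rcases Finset.mem_insert.mp hw with rfl | hw
      · exact le_rfl
      · exact (hCle w hw).trans h.le
    · rw [Finset.card_insert_of_notMem hyC]
  have h1 : C.card + 1 ≤ sSup (chainSet y) := le_csSup (bddAbove_chainSet y) hmem'
  have h2 : 1 ≤ sSup (chainSet x) := le_csSup (bddAbove_chainSet x) (one_mem_chainSet x)
  rw [level_eq', level_eq']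
  omega

private lemma incomp_of_level_eq [Fintype P] {a b : P} (hl : level a = level b)
    (hne : a ≠ b) : Incomp a b := by
  refine ⟨hne, fun hle => ?_, fun hle => ?_⟩
  · exact absurd hl (ne_of_lt (level_lt (lt_of_le_of_ne hle hne)))
  · exact absurd hl.symm (ne_of_lt (level_lt (lt_of_le_of_ne hle hne.symm)))

private lemma Incomp.symm' {a b : P} (h : Incomp a b) : Incomp b a :=
  ⟨h.1.symm, h.2.2, h.2.1⟩

private lemma isTrunkOn_pair (a b : P) : IsTrunkOn ({a, b} : Set P) := by
  intro x y z hx hy hz hxz hxy hyz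
  simp only [Set.mem_insert_iff, Set.mem_singleton_iff] at hx hy hz
  rcases hx with rfl | rfl <;> rcases hy with rfl | rfl <;> rcases hz with rfl | rfl <;>
    first
      | exact absurd rfl hxy.1
      | exact absurd rfl hyz.1
      | exact absurd rfl hxz

/-- A finite partial order is up-regular if and only if, for every nonempty trunk `T`,
adjoining to `T` all elements of the highest level attained by `T` again yields a
trunk. -/
theorem upRegular_iff_trunk_union_top_level
    (P : Type*) [PartialOrder P] [Fintype P] :
    UpRegular P ↔
      ∀ T : Set P, T.Nonempty → IsTrunkOn T →
        IsTrunkOn (T ∪ {x : P | level x = sSup (level '' T)}) := by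
  constructor
  · -- forward direction
    intro h T hne hT
    set m := sSup (level '' T) with hm
    obtain ⟨t, htT, htm⟩ : ∃ t ∈ T, level t = m := by
      have : sSup (level '' T) ∈ level '' T :=
        Nat.sSup_mem (hne.image _) (Set.Finite.bddAbove (Set.toFinite _))
      obtain ⟨t, ht, h'⟩ := this
      exact ⟨t, ht, h'⟩
    have hle : ∀ a ∈ T, level a ≤ m := fun a ha =>
      le_csSup (Set.Finite.bddAbove (Set.toFinite _)) ⟨a, ha, rfl⟩
    have step : ∀ a b c : P, level a < m → level b = m → level c = m →
        Incomp a b → a ≠ c → Incomp a c := by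
      intro a b c hab hb hc hincomp hac
      obtain ⟨h1, h2⟩ := h a b c (hb ▸ hab) (hb.trans hc.symm)
      refine ⟨hac, fun hlea => ?_, fun hlea => ?_⟩
      · exact hincomp.2.1 (le_of_lt (h1.mpr (lt_of_le_of_ne hlea hac)))
      · exact hincomp.2.2 (le_of_lt (h2.mpr (lt_of_le_of_ne hlea hac.symm)))
    have net : ∀ a : P, level a < m → a ≠ t := by
      intro a ha e
      subst e
      exact absurd htm (ne_of_lt ha)
    intro x y z hx hy hz hxz hxy hyz
    have key : ∀ a ∈ T ∪ {p : P | level p = m}, level a = m ∨ (a ∈ T ∧ level a < m) := by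
      intro a ha
      rcases ha with ha | ha
      · rcases lt_or_eq_of_le (hle a ha) with h' | h'
        · exact Or.inr ⟨ha, h'⟩
        · exact Or.inl h'
      · exact Or.inl ha
    rcases key x hx with hxm | ⟨hxT, hxm⟩ <;> rcases key z hz with hzm | ⟨hzT, hzm⟩
    · exact incomp_of_level_eq (hxm.trans hzm.symm) hxz
    · rcases key y hy with hym | ⟨hyT, hym⟩
      · exact (step z y x hzm hym hxm hyz.symm' hxz.symm).symm'
      · have hyt : Incomp y t := step y x t hym hxm htm hxy.symm' (net y hym)
        have hzt : Incomp z t := hT z y t hzT hyT htT (net z hzm) hyz.symm' hyt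
        exact (step z t x hzm htm hxm hzt hxz.symm).symm'
    · rcases key y hy with hym | ⟨hyT, hym⟩
      · exact step x y z hxm hym hzm hxy hxz
      · have hyt : Incomp y t := step y z t hym hzm htm hyz (net y hym)
        have hxt : Incomp x t := hT x y t hxT hyT htT (net x hxm) hxy hyt
        exact step x t z hxm htm hzm hxt hxz
    · rcases key y hy with hym | ⟨hyT, hym⟩
      · have hxt : Incomp x t := step x y t hxm hym htm hxy (net x hxm)
        have hzt : Incomp z t := step z y t hzm hym htm hyz.symm' (net z hzm)
        exact hT x t z hxT htT hzT hxz hxt hzt.symm'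
      · exact hT x y z hxT hyT hzT hxz hxy hyz
  · -- converse
    intro h
    have main : ∀ x y z : P, level x < level y → level y = level z → x < y → x < z := by
      intro x y z hxy hyz hlt
      by_cases hyz' : y = z
      · exact hyz' ▸ hlt
      by_contra hxz
      have hxzlev : level x < level z := hyz ▸ hxy
      have hnexz : x ≠ z := ne_of_apply_ne level (ne_of_lt hxzlev)
      have hxz' : Incomp x z := by
        refine ⟨hnexz, fun hlea => ?_, fun hlea => ?_⟩
        · exact hxz (lt_of_le_of_ne hlea hnexz)
        · exact absurd (level_lt (lt_of_le_of_ne hlea hnexz.symm)) (by omega)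
      have hzy : Incomp z y := incomp_of_level_eq hyz.symm (Ne.symm hyz')
      have hmq : sSup (level '' ({x, z} : Set P)) = level z := by
        rw [Set.image_pair, csSup_pair]
        exact sup_eq_right.mpr hxzlev.le
      have htr := h {x, z} ⟨x, by simp⟩ (isTrunkOn_pair x z)
      have hy' : y ∈ ({x, z} : Set P) ∪ {p : P | level p = sSup (level '' ({x, z} : Set P))} :=
        Or.inr (by rw [Set.mem_setOf_eq, hmq]; exact hyz)
      have hres := htr x z y (Or.inl (by simp)) (Or.inl (by simp)) hy'
        (ne_of_apply_ne level (ne_of_lt hxy)) hxz' hzy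
      exact hres.2.1 hlt.le
    intro x y z hxy hyz
    refine ⟨⟨fun hlt => main x y z hxy hyz hlt,
      fun hlt => main x z y (hyz ▸ hxy) hyz.symm hlt⟩, ?_⟩
    constructor
    · intro hyx
      exact absurd (level_lt hyx) (by omega)
    · intro hzx
      have := level_lt hzx
      omega
end

section
/- Let P be a finite up-regular partial order and let U be the union of all maximum chains of P. Then the height of the induced suborder on P \ U is at most half the height of P: 2 · height(P \ U) ≤ height(P). -/
variable {P : Type*} [PartialOrder P]

/-- A maximum chain of a finite partial order: a chain of maximum cardinality. -/
def IsMaximumChain (C : Set P) : Prop :=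
  IsChain (· ≤ ·) C ∧ ∀ D : Set P, IsChain (· ≤ ·) D → D.ncard ≤ C.ncard

/-- The union of all maximum chains of `P`. -/
def maxChainUnion (P : Type*) [PartialOrder P] : Set P :=
  {x : P | ∃ C : Set P, IsMaximumChain C ∧ x ∈ C}

/-- The height of the suborder of a finite partial order induced on a set `S`:
the maximum cardinality of a chain contained in `S`. -/
noncomputable def heightOn (S : Set P) : ℕ :=
  sSup {n : ℕ | ∃ C : Finset P,
    (C : Set P) ⊆ S ∧ IsChain (· ≤ ·) (C : Set P) ∧ C.card = n}

section Aux
variable [Fintype P]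

private lemma lvl_bdd (x : P) : BddAbove {n : ℕ | ∃ C : Finset P,
    IsChain (· ≤ ·) (C : Set P) ∧ x ∈ C ∧ (∀ y ∈ C, y ≤ x) ∧ C.card = n} := by
  refine ⟨Fintype.card P, fun n hn => ?_⟩
  obtain ⟨C, -, -, -, rfl⟩ := hn
  exact Finset.card_le_univ C

private lemma one_mem_lvl (x : P) : 1 ∈ {n : ℕ | ∃ C : Finset P,
    IsChain (· ≤ ·) (C : Set P) ∧ x ∈ C ∧ (∀ y ∈ C, y ≤ x) ∧ C.card = n} := by
  refine ⟨{x}, ?_, by simp, by simp, by simp⟩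
  simp

private lemma level_add_one (x : P) :
    level x + 1 = sSup {n : ℕ | ∃ C : Finset P,
      IsChain (· ≤ ·) (C : Set P) ∧ x ∈ C ∧ (∀ y ∈ C, y ≤ x) ∧ C.card = n} := by
  have h1 : 1 ≤ sSup {n : ℕ | ∃ C : Finset P,
      IsChain (· ≤ ·) (C : Set P) ∧ x ∈ C ∧ (∀ y ∈ C, y ≤ x) ∧ C.card = n} :=
    le_csSup (lvl_bdd x) (one_mem_lvl x)
  unfold level
  omega

private lemma exists_level_chain (x : P) : ∃ C : Finset P,
    IsChain (· ≤ ·) (C : Set P) ∧ x ∈ C ∧ (∀ y ∈ C, y ≤ x) ∧ C.card = level x + 1 := by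
  have := Nat.sSup_mem ⟨1, one_mem_lvl x⟩ (lvl_bdd x)
  rw [← level_add_one x] at this
  exact this

private lemma le_level {x : P} {C : Finset P} (hC : IsChain (· ≤ ·) (C : Set P))
    (hx : x ∈ C) (hle : ∀ y ∈ C, y ≤ x) : C.card ≤ level x + 1 := by
  rw [level_add_one]
  exact le_csSup (lvl_bdd x) ⟨C, hC, hx, hle, rfl⟩

private lemma level_lt_level {x y : P} (hxy : x < y) : level x < level y := by
  classical
  obtain ⟨C, hC, hxC, hle, hcard⟩ := exists_level_chain x
  have hyC : y ∉ C := fun hy => absurd (hle y hy) hxy.not_ge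
  have hchain : IsChain (· ≤ ·) ((insert y C : Finset P) : Set P) := by
    rw [Finset.coe_insert]
    exact hC.insert (fun b hb _ => Or.inr ((hle b hb).trans hxy.le))
  have := le_level hchain (Finset.mem_insert_self y C)
    (fun w hw => by
      rcases Finset.mem_insert.mp hw with rfl | hw
      · exact le_rfl
      · exact (hle w hw).trans hxy.le)
  rw [Finset.card_insert_of_notMem hyC, hcard] at this
  omega

private lemma ht_bdd (S : Set P) : BddAbove {n : ℕ | ∃ C : Finset P,
    (C : Set P) ⊆ S ∧ IsChain (· ≤ ·) (C : Set P) ∧ C.card = n} := by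
  refine ⟨Fintype.card P, fun n hn => ?_⟩
  obtain ⟨C, -, -, rfl⟩ := hn
  exact Finset.card_le_univ C

private lemma zero_mem_ht (S : Set P) : 0 ∈ {n : ℕ | ∃ C : Finset P,
    (C : Set P) ⊆ S ∧ IsChain (· ≤ ·) (C : Set P) ∧ C.card = n} :=
  ⟨∅, by simp⟩

private lemma exists_heightOn_chain (S : Set P) : ∃ C : Finset P,
    (C : Set P) ⊆ S ∧ IsChain (· ≤ ·) (C : Set P) ∧ C.card = heightOn S :=
  Nat.sSup_mem ⟨0, zero_mem_ht S⟩ (ht_bdd S)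

private lemma le_heightOn {S : Set P} {C : Finset P} (hCS : (C : Set P) ⊆ S)
    (hC : IsChain (· ≤ ·) (C : Set P)) : C.card ≤ heightOn S :=
  le_csSup (ht_bdd S) ⟨C, hCS, hC, rfl⟩

private lemma level_succ_le_height (x : P) : level x + 1 ≤ heightOn (Set.univ : Set P) := by
  obtain ⟨C, hC, -, -, hcard⟩ := exists_level_chain x
  exact hcard ▸ le_heightOn (Set.subset_univ _) hC

private lemma maxChain_of_card {C : Finset P} (hC : IsChain (· ≤ ·) (C : Set P))
    (hcard : C.card = heightOn (Set.univ : Set P)) : IsMaximumChain (C : Set P) := by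
  refine ⟨hC, fun D hD => ?_⟩
  have hfin : D.Finite := Set.toFinite D
  have h1 : hfin.toFinset.card ≤ heightOn (Set.univ : Set P) :=
    le_heightOn (Set.subset_univ _) (by rwa [hfin.coe_toFinset])
  rw [Set.ncard_coe_finset, hcard]
  rwa [Set.ncard_eq_toFinset_card D hfin]

private lemma mem_U {C : Finset P} (hC : IsChain (· ≤ ·) (C : Set P))
    (hcard : C.card = heightOn (Set.univ : Set P)) {z : P} (hz : z ∈ C) :
    z ∈ maxChainUnion P :=
  ⟨(C : Set P), maxChain_of_card hC hcard, Finset.mem_coe.mpr hz⟩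

private lemma notU_level {z : P} (hz : z ∉ maxChainUnion P) :
    level z + 2 ≤ heightOn (Set.univ : Set P) := by
  have h1 := level_succ_le_height z
  rcases eq_or_lt_of_le h1 with heq | hlt
  · exfalso
    obtain ⟨Cz, hCz, hzCz, -, hCzcard⟩ := exists_level_chain z
    exact hz (mem_U hCz (by omega) hzCz)
  · omega

private lemma level_injOn {M : Finset P} (hM : IsChain (· ≤ ·) (M : Set P)) :
    Set.InjOn level (M : Set P) := by
  intro a ha b hb hab
  by_contra hne
  rcases hM ha hb hne with hle | hle
  · exact absurd hab (level_lt_level (lt_of_le_of_ne hle hne)).ne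
  · exact absurd hab.symm (level_lt_level (lt_of_le_of_ne hle (Ne.symm hne))).ne

private lemma image_level {M : Finset P} (hM : IsChain (· ≤ ·) (M : Set P))
    (hMcard : M.card = heightOn (Set.univ : Set P)) :
    M.image level = Finset.range (heightOn (Set.univ : Set P)) := by
  apply Finset.eq_of_subset_of_card_le
  · intro n hn
    obtain ⟨m, hm, rfl⟩ := Finset.mem_image.mp hn
    exact Finset.mem_range.mpr (by have := level_succ_le_height m; omega)
  · rw [Finset.card_range, Finset.card_image_of_injOn (level_injOn hM), hMcard]

private lemma notU_gap (h : UpRegular P) {z w : P} (hz : z ∉ maxChainUnion P)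
    (hzw : z < w) : level z + 2 ≤ level w := by
  classical
  have hlt := level_lt_level hzw
  by_contra hcon
  have hw : level w = level z + 1 := by omega
  set ℓ := level z with hℓ
  obtain ⟨M, -, hM, hMcard⟩ := exists_heightOn_chain (Set.univ : Set P)
  have hH : ℓ + 2 ≤ heightOn (Set.univ : Set P) := by
    have := level_succ_le_height w; omega
  obtain ⟨m, hmM, hml⟩ : ∃ m ∈ M, level m = ℓ + 1 := by
    have : ℓ + 1 ∈ M.image level := by
      rw [image_level hM hMcard]; exact Finset.mem_range.mpr (by omega)
    simpa using Finset.mem_image.mp this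
  have hzm : z < m :=
    ((h z m w (by omega) (by rw [hml, hw])).1).mpr hzw
  obtain ⟨Cz, hCz, hzCz, hCzle, hCzcard⟩ := exists_level_chain z
  set F := M.filter (fun c => ℓ + 1 ≤ level c) with hF
  have hmF : ∀ c ∈ F, m ≤ c := by
    intro c hc
    obtain ⟨hcM, hcl⟩ := Finset.mem_filter.mp hc
    rcases eq_or_ne c m with rfl | hne
    · exact le_rfl
    · rcases hM (Finset.mem_coe.mpr hcM) (Finset.mem_coe.mpr hmM) hne with hcm | hmc
      · exact absurd (level_lt_level (lt_of_le_of_ne hcm hne)) (by omega)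
      · exact hmc
  have hzF : ∀ c ∈ F, z < c := fun c hc => lt_of_lt_of_le hzm (hmF c hc)
  have hdisj : Disjoint Cz F := Finset.disjoint_left.mpr
    (fun a ha hf => absurd (hCzle a ha) (hzF a hf).not_ge)
  have hchain : IsChain (· ≤ ·) ((Cz ∪ F : Finset P) : Set P) := by
    intro a ha b hb hab
    rw [Finset.coe_union, Set.mem_union] at ha hb
    rcases ha with ha | ha <;> rcases hb with hb | hb
    · exact hCz ha hb hab
    · exact Or.inl ((hCzle a ha).trans (hzF b hb).le)
    · exact Or.inr ((hCzle b hb).trans (hzF a ha).le)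
    · exact hM (Finset.mem_coe.mpr (Finset.filter_subset _ _ (Finset.mem_coe.mp ha)))
        (Finset.mem_coe.mpr (Finset.filter_subset _ _ (Finset.mem_coe.mp hb))) hab
  have hFcard : F.card = heightOn (Set.univ : Set P) - (ℓ + 1) := by
    have h2 : F.card = (F.image level).card := by
      refine (Finset.card_image_of_injOn ((level_injOn hM).mono ?_)).symm
      intro x hx
      exact Finset.mem_coe.mpr (Finset.filter_subset _ _ (Finset.mem_coe.mp hx))
    have h1 : F.image level = (Finset.range (heightOn (Set.univ : Set P))).filter
        (fun n => ℓ + 1 ≤ n) := by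
      ext n
      simp only [hF, Finset.mem_image, Finset.mem_filter]
      constructor
      · rintro ⟨c, ⟨hcM, hcl⟩, rfl⟩
        refine ⟨?_, hcl⟩
        have : level c ∈ M.image level := Finset.mem_image_of_mem _ hcM
        rwa [image_level hM hMcard] at this
      · rintro ⟨hn, hℓn⟩
        have : n ∈ M.image level := by rw [image_level hM hMcard]; exact hn
        obtain ⟨c, hcM, rfl⟩ := Finset.mem_image.mp this
        exact ⟨c, ⟨hcM, hℓn⟩, rfl⟩
    have h3 : (Finset.range (heightOn (Set.univ : Set P))).filter (fun n => ℓ + 1 ≤ n)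
        = Finset.Ico (ℓ + 1) (heightOn (Set.univ : Set P)) := by
      ext n
      simp only [Finset.mem_filter, Finset.mem_range, Finset.mem_Ico]
      omega
    rw [h2, h1, h3, Nat.card_Ico]
  have hcard : (Cz ∪ F).card = heightOn (Set.univ : Set P) := by
    rw [Finset.card_union_of_disjoint hdisj, hCzcard, hFcard]
    omega
  exact hz (mem_U hchain hcard (Finset.mem_union_left _ hzCz))

private lemma chain_max {D : Finset P} (hD : IsChain (· ≤ ·) (D : Set P))
    (hne : D.Nonempty) : ∃ z ∈ D, ∀ y ∈ D, y ≤ z := by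
  obtain ⟨z, hz, hmax⟩ := D.exists_maximal hne
  refine ⟨z, hz, fun y hy => ?_⟩
  rcases eq_or_ne y z with rfl | hne'
  · exact le_rfl
  · rcases hD (Finset.mem_coe.mpr hy) (Finset.mem_coe.mpr hz) hne' with hle | hle
    · exact hle
    · exact absurd (hmax hy hle) (lt_of_le_of_ne hle (Ne.symm hne')).not_ge

private lemma chain_bound (h : UpRegular P) :
    ∀ n (D : Finset P), D.card = n → (D : Set P) ⊆ (maxChainUnion P)ᶜ →
      IsChain (· ≤ ·) (D : Set P) → ∀ z ∈ D, (∀ y ∈ D, y ≤ z) →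
      2 * D.card ≤ level z + 2 := by
  intro n
  induction n with
  | zero =>
    intro D hc _ _ z hz _
    exact absurd hz (Finset.card_eq_zero.mp hc ▸ Finset.notMem_empty z)
  | succ n ih =>
    intro D hc hsub hchain z hz hmax
    classical
    set D' := D.erase z with hD'
    have hD'card : D'.card = n := by
      rw [hD', Finset.card_erase_of_mem hz, hc]
      omega
    have hsub' : (D' : Set P) ⊆ (maxChainUnion P)ᶜ := fun a ha =>
      hsub (Finset.mem_coe.mpr (Finset.mem_of_mem_erase (Finset.mem_coe.mp ha)))
    have hchain' : IsChain (· ≤ ·) (D' : Set P) := hchain.mono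
      (fun a ha => Finset.mem_coe.mpr (Finset.mem_of_mem_erase (Finset.mem_coe.mp ha)))
    rcases Finset.eq_empty_or_nonempty D' with he | hne
    · have : D.card = 1 := by
        have := Finset.card_erase_of_mem hz
        rw [← hD', he] at this
        simp at this
        omega
      omega
    · obtain ⟨z', hz', hmax'⟩ := chain_max hchain' hne
      have hz'z : z' < z := lt_of_le_of_ne (hmax z' (Finset.mem_of_mem_erase hz'))
        (Finset.ne_of_mem_erase hz')
      have ih' := ih D' hD'card hsub' hchain' z' hz' hmax'
      have hgap := notU_gap h (hsub' (Finset.mem_coe.mpr hz')) hz'z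
      omega

end Aux

/-- For a finite up-regular partial order `P`, the height of the suborder induced on
the complement of the union `U` of all maximum chains is at most half the height of
`P`. -/
theorem upRegular_height_compl_maxChainUnion_le
    (P : Type*) [PartialOrder P] [Fintype P] (h : UpRegular P) :
    2 * heightOn ((maxChainUnion P)ᶜ) ≤ heightOn (Set.univ : Set P) := by
  obtain ⟨D, hsub, hchain, hcard⟩ := exists_heightOn_chain ((maxChainUnion P)ᶜ)
  rcases Finset.eq_empty_or_nonempty D with rfl | hne
  · simp at hcard
    omega
  · obtain ⟨z, hz, hmax⟩ := chain_max hchain hne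
    have h1 := chain_bound h D.card D rfl hsub hchain z hz hmax
    have h2 := notU_level (hsub (Finset.mem_coe.mpr hz))
    omega
end
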